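/- Let x′ ∈ {0,1}^{n′}, let Z = {z^1,…,z^R} be any multiset of R traces of x′ (with deletion sets D_1,…,D_R), let w be the output of BMA(n′, Z), and let t ≥ 1 be an integer such that w_{[0:t−1]} = x′_{[0:t−1]}. Then for each i ∈ [R]: (1) if x′_{position_i(t−1)} ≠ x′_{t−1}, then current_i(t) = current_i(t−1), position_i(t) = position_i(t−1), and distance_i(t) = distance_i(t−1) − 1; and (2) if x′_{position_i(t−1)} = x′_{t−1}, then current_i(t) = current_i(t−1)+1, position_i(t) = position_i(t−1)+ℓ+1, and distance_i(t) = distance_i(t−1)+ℓ, where ℓ ≥ 0 is the integer such that position_i(t−1)+1,…,position_i(t−1)+ℓ all lie in D_i and position_i(t−1)+ℓ+1 ∉ D_i. -/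

import Mathlib

/-!
Since BMA has reproduced `x'` up to round `t - 1`, its bit `w_{t-1}` is `x'_{t-1}`, while the bit
that trace `i` offers in that round is `x'_{position_i(t-1)}`. The pointer `current_i` moves
exactly when the two agree, and then `f_i` jumps over the `ℓ` deleted positions.
-/

open scoped Classical

namespace TraceRec

/-- The subword `x_{[a:b]} = (x_a, …, x_b)` of a string. -/
def subword (x : List Bool) (a b : ℕ) : List Bool := (x.drop a).take (b + 1 - a)

/-- The trace of `x` obtained by deleting the coordinates in the deletion set `D`. -/
def trace (x : List Bool) (D : Finset ℕ) : List Bool :=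
  ((List.range x.length).filter (fun i => decide (i ∉ D))).map (fun i => x.getD i false)

/-- Probability weight of the deletion set `D` for an `n`-bit string at deletion rate `δ`:
each of the `n` coordinates is deleted independently with probability `δ`. -/
noncomputable def delWeight (δ : ℝ) (n : ℕ) (D : Finset ℕ) : ℝ :=
  δ ^ D.card * (1 - δ) ^ (n - D.card)

/-- Probability, over `N` independent deletion sets for an `n`-bit string, of event `P`. -/
noncomputable def prSets (δ : ℝ) (n N : ℕ) (P : (Fin N → Finset ℕ) → Prop) : ℝ :=
  ∑ Ds ∈ Fintype.piFinset (fun _ : Fin N => (Finset.range n).powerset),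
    (∏ i, delWeight δ n (Ds i)) * (if P Ds then 1 else 0)

/-- Probability of event `P` over `N` independent traces of `x` drawn from `Del_δ(x)`. -/
noncomputable def prTraces (δ : ℝ) (x : List Bool) (N : ℕ)
    (P : (Fin N → List Bool) → Prop) : ℝ :=
  prSets δ x.length N (fun Ds => P (fun i => trace x (Ds i)))

/-- Probability of event `P` over one trace of `x` drawn from `Del_δ(x)`. -/
noncomputable def prOne (δ : ℝ) (x : List Bool) (P : List Bool → Prop) : ℝ :=
  prTraces δ x 1 (fun ys => P (ys 0))

/-- The set of all binary strings of length `n`. -/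
def binStrings (n : ℕ) : Finset (List Bool) :=
  Finset.image (fun f : Fin n → Bool => List.ofFn f) Finset.univ

/-- Majority bit of `N` bits. -/
def majority (N : ℕ) (b : Fin N → Bool) : Bool :=
  decide (N ≤ 2 * (Finset.univ.filter (fun i => b i = true)).card)

/-- Padding of a trace with `0`s (`false`) at the end. -/
def pad (z : List Bool) : ℕ → Bool := fun j => z.getD j false

/-- The pointers `current_i(t)` in the Bitwise Majority Alignment algorithm. -/
def bmaCur (N : ℕ) (u : Fin N → ℕ → Bool) : ℕ → Fin N → ℕ
  | 0 => fun _ => 0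
  | t + 1 => fun i =>
      let c := bmaCur N u t
      if u i (c i) = majority N (fun j => u j (c j)) then c i + 1 else c i

/-- The bit `w_t` output by BMA at round `t`. -/
def bmaBit (N : ℕ) (u : Fin N → ℕ → Bool) (t : ℕ) : Bool :=
  majority N (fun j => u j (bmaCur N u t j))

/-- The Bitwise Majority Alignment algorithm on `N` traces, run for `n'` rounds. -/
def BMA (n' N : ℕ) (z : Fin N → List Bool) : List Bool :=
  (List.range n').map (fun t => bmaBit N (fun i => pad (z i)) t)

/-- `fmap D j`: the original position of the `j`-th surviving bit under deletion set `D`,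
i.e. the unique `k ∉ D` with `k - |D ∩ [0:k-1]| = j`. -/
noncomputable def fmap (D : Finset ℕ) (j : ℕ) : ℕ := Nat.nth (fun k => k ∉ D) j

/-- `position_i(t) = f_i(current_i(t))` in the run of BMA. -/
noncomputable def positionOf {R : ℕ} (z : Fin R → List Bool) (D : Fin R → Finset ℕ)
    (t : ℕ) (i : Fin R) : ℕ :=
  fmap (D i) (bmaCur R (fun i => pad (z i)) t i)

/-- `distance_i(t) = position_i(t) - t` in the run of BMA. -/
noncomputable def distOf {R : ℕ} (z : Fin R → List Bool) (D : Fin R → Finset ℕ)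
    (t : ℕ) (i : Fin R) : ℤ :=
  (positionOf z D t i : ℤ) - t

/-- `z` is a prefix of the infinite periodic string `s^∞`. -/
def periodicPrefix (s z : List Bool) : Prop :=
  ∀ j < z.length, z.getD j false = s.getD (j % s.length) false

/-- `z` is an `s`-desert for some nonempty `s` of length at most `C`
(with desert length threshold `M`). -/
def isDesert (C M : ℕ) (z : List Bool) : Prop :=
  ∃ s : List Bool, s ≠ [] ∧ s.length ≤ C ∧ M ≤ z.length ∧ periodicPrefix s z

/-- Location `i` of `x` is deep in a desert: `x_{[i-m:i+m]}` is a desert. -/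
def deepInDesert (C m : ℕ) (x : List Bool) (i : ℕ) : Prop :=
  m ≤ i ∧ isDesert C (2 * m + 1) (subword x (i - m) (i + m))

/-- `x` has a desert: some subword of `x` is a desert. -/
def hasDesert (C M : ℕ) (x : List Bool) : Prop :=
  ∃ a b, isDesert C M (subword x a b)

/-- `r` is the first location of `x` that is deep in a desert. -/
def firstDeep (C m : ℕ) (x : List Bool) (r : ℕ) : Prop :=
  deepInDesert C m x r ∧ ∀ i < r, ¬ deepInDesert C m x i

/-- The deletion rate `δ = n^{-(1/3+ε)}`. -/
noncomputable def delta (ε : ℝ) (n : ℕ) : ℝ := (n : ℝ) ^ (-(1/3 + ε))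

/-- `C = ⌈100/ε⌉`. -/
noncomputable def Cp (ε : ℝ) : ℕ := ⌈(100 : ℝ) / ε⌉₊

/-- `m = ⌈n^{1/3}⌉`. -/
noncomputable def mp (n : ℕ) : ℕ := ⌈(n : ℝ) ^ ((1 : ℝ) / 3)⌉₊

/-- `M = 2m + 1`. -/
noncomputable def Mp (n : ℕ) : ℕ := 2 * mp n + 1

/-- `σ = ⌈√(δn)·log n⌉`. -/
noncomputable def sigp (ε : ℝ) (n : ℕ) : ℕ :=
  ⌈Real.sqrt (delta ε n * n) * Real.log n⌉₊

/-- A family of deletion sets (for traces of an `n'`-bit string) is good. -/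
def goodFam (C M n' : ℕ) {R : ℕ} (D : Fin R → Finset ℕ) : Prop :=
  (∀ i : Fin R, ∀ a, a + 2 * C ^ 2 * M ≤ n' →
      (D i ∩ Finset.Ico a (a + 2 * C ^ 2 * M)).card ≤ C) ∧
  (∀ a, a + (M + C + 1) ≤ n' →
      ((Finset.univ.filter
          (fun i : Fin R => (D i ∩ Finset.Ico a (a + (M + C + 1))).Nonempty)).card : ℝ)
        ≤ (R : ℝ) / (C : ℝ) ^ 3)

/-- Two tuples of strings are `η`-close as multisets: one is obtained from the other by
substituting at most `ηN` of its strings. -/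
def closeTuples (η : ℝ) {N : ℕ} (z z' : Fin N → List Bool) : Prop :=
  ∃ π : Equiv.Perm (Fin N),
    ((Finset.univ.filter (fun i => z i ≠ z' (π i))).card : ℝ) ≤ η * N

/-- `s` is a minimal-length pattern for the desert `x_{[r-m:r+m]}` around location `r`. -/
def minimalPattern (C m : ℕ) (x : List Bool) (r : ℕ) (s : List Bool) : Prop :=
  s ≠ [] ∧ s.length ≤ C ∧ periodicPrefix s (subword x (r - m) (r + m)) ∧
    ∀ s' : List Bool, s' ≠ [] → periodicPrefix s' (subword x (r - m) (r + m)) →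
      s.length ≤ s'.length

/-- `e` is the end position of the desert containing `x_r` (for pattern length `k`):
the smallest integer `≥ r + m` such that `x_{e+1} ≠ x_{e+1-k}`. -/
def isEnd (x : List Bool) (r m k e : ℕ) : Prop :=
  r + m ≤ e ∧ x.getD (e + 1) false ≠ x.getD (e + 1 - k) false ∧
    ∀ j, r + m ≤ j → j < e → x.getD (j + 1) false = x.getD (j + 1 - k) false

/-- The tail string `tail = x_{[end-k+2 : end-k+8σ+1]}` of the desert. -/
def tailStr (x : List Bool) (k e σ : ℕ) : List Bool :=
  subword x (e - k + 2) (e - k + 8 * σ + 1)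

/-- `last(y)` for the trace of `x` with deletion set `D`: the position in the trace of the
last surviving bit of `x_{[0:e]}`, or `-1` if all of `x_{[0:e]}` is deleted. -/
def lastPos (D : Finset ℕ) (e : ℕ) : ℤ :=
  (((Finset.range (e + 1)).filter (fun i => decide (i ∉ D))).card : ℤ) - 1

/-- `w ∈ Cyc_s`: `w` is a cyclic shift of `s`. -/
def inCyc (s w : List Bool) : Prop := ∃ j, w = s.rotate j

/-- `sig` is the signature of the desert of `x` with pattern `s` ending at `e`. -/
def isSig (x s : List Bool) (e σ : ℕ) (sig : List Bool) : Prop :=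
  (∃ d, e + s.length + 1 ≤ d ∧ d ≤ e + 8 * σ - s.length + 1 ∧
      ¬ inCyc s (subword x (d + 1 - s.length) d) ∧
      (∀ d', e + s.length + 1 ≤ d' → d' < d → inCyc s (subword x (d' + 1 - s.length) d')) ∧
      sig = subword x (e - s.length + 2) d) ∨
  ((∀ d, e + s.length + 1 ≤ d → d ≤ e + 8 * σ - s.length + 1 →
      inCyc s (subword x (d + 1 - s.length) d)) ∧
    sig = tailStr x s.length e σ)

/-- A string `z` is in the right form `w ∘ sig`, where the leftmost `k`-bit subword of `z`
not in `Cyc_s` consists of the first `k` bits of the trailing occurrence of `sig`. -/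
def rightForm (s sig z : List Bool) : Prop :=
  ∃ w : List Bool, z = w ++ sig ∧
    ∀ a < w.length, inCyc s ((z.drop a).take s.length)

end TraceRec

theorem Nat.getElem_filter_range_eq_nth (p : ℕ → Prop) [DecidablePred p] {n j : ℕ}
    (hj : j < ((List.range n).filter (fun k => decide (p k))).length) :
    ((List.range n).filter (fun k => decide (p k)))[j] = Nat.nth p j := by
  induction n with
  | zero => simp at hj
  | succ n ih =>
    simp only [List.range_succ, List.filter_append] at hj ⊢
    by_cases hjn : j < ((List.range n).filter (fun k => decide (p k))).length
    · rw [List.getElem_append_left hjn, ih hjn]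
    · have hpn : p n := by by_contra h; simp [h] at hj; omega
      have hcount : Nat.count p n = j := by
        rw [Nat.count, List.countP_eq_length_filter]
        simp only [List.length_append, List.filter_singleton, hpn, decide_true, cond_true,
          List.length_singleton] at hj
        omega
      simp only [List.filter_singleton, hpn, decide_true, cond_true]
      rw [List.getElem_append_right (by omega), List.getElem_singleton, ← hcount,
        Nat.nth_count hpn]

theorem Nat.getD_map_filter_range_eq_getD_nth {α : Type*} (x : List α) (d : α)
    (p : ℕ → Prop) [DecidablePred p] (hp : (Set.ofPred p).Infinite) (j : ℕ) :
    (((List.range x.length).filter (fun k => decide (p k))).map (x.getD · d)).getD j d =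
      x.getD (Nat.nth p j) d := by
  set L := (List.range x.length).filter (fun k => decide (p k))
  by_cases hj : j < L.length
  · rw [List.getD_eq_getElem _ _ (by simpa using hj), List.getElem_map,
      Nat.getElem_filter_range_eq_nth p hj]
  · have hlen : Nat.count p x.length = L.length := by
      rw [Nat.count, List.countP_eq_length_filter]
    have hx : x.length ≤ Nat.nth p j := (Nat.count_le_iff_le_nth hp).1 (by omega)
    rw [List.getD_eq_default _ _ (by simpa using hj), List.getD_eq_default _ _ hx]

theorem Nat.nth_add_one_eq_of_gap (p : ℕ → Prop) (hp : (Set.ofPred p).Infinite) (c ℓ : ℕ)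
    (hgap : ∀ j, 1 ≤ j → j ≤ ℓ → ¬ p (Nat.nth p c + j)) (hnext : p (Nat.nth p c + ℓ + 1)) :
    Nat.nth p (c + 1) = Nat.nth p c + ℓ + 1 := by
  have hlt : Nat.nth p c < Nat.nth p (c + 1) := (Nat.nth_lt_nth hp).2 c.lt_succ_self
  rcases lt_trichotomy (Nat.nth p (c + 1)) (Nat.nth p c + ℓ + 1) with h | h | h
  · obtain ⟨j, hj⟩ : ∃ j, Nat.nth p (c + 1) = Nat.nth p c + j :=
      ⟨_, (Nat.add_sub_of_le hlt.le).symm⟩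
    exact absurd (hj ▸ Nat.nth_mem_of_infinite hp (c + 1)) (hgap j (by omega) (by omega))
  · exact h
  · have := Nat.le_nth_of_lt_nth_succ h hnext
    omega

namespace TraceRec

theorem pad_trace (x : List Bool) (D : Finset ℕ) (j : ℕ) :
    pad (trace x D) j = x.getD (fmap D j) false :=
  Nat.getD_map_filter_range_eq_getD_nth x false _ (D.finite_toSet.infinite_compl) j

theorem bmaBit_eq_of_subword_BMA_eq {n' R : ℕ} {z : Fin R → List Bool} {x : List Bool} {t : ℕ}
    (ht : t < n') (hw : subword (BMA n' R z) 0 t = subword x 0 t) :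
    bmaBit R (fun j => pad (z j)) t = x.getD t false := by
  have hlt : t < (subword (BMA n' R z) 0 t).length := by simp [subword, BMA]; omega
  have hget := List.getElem_of_eq hw hlt
  simp only [subword, List.drop_zero, List.getElem_take, BMA, List.getElem_map,
    List.getElem_range] at hget
  rw [hget, List.getD_eq_getElem]

theorem bmaCur_succ (N : ℕ) (u : Fin N → ℕ → Bool) (t : ℕ) (i : Fin N) :
    bmaCur N u (t + 1) i =
      if u i (bmaCur N u t i) = bmaBit N u t then bmaCur N u t i + 1 else bmaCur N u t i :=
  rfl

theorem statement6_general (n' R : ℕ) (x' : List Bool)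
    (D : Fin R → Finset ℕ)
    (z : Fin R → List Bool) (hz : ∀ i, z i = trace x' (D i))
    (t : ℕ) (ht : 1 ≤ t) (ht' : t ≤ n')
    (hw : subword (BMA n' R z) 0 (t - 1) = subword x' 0 (t - 1))
    (i : Fin R) :
    (x'.getD (positionOf z D (t - 1) i) false ≠ x'.getD (t - 1) false →
      bmaCur R (fun j => pad (z j)) t i = bmaCur R (fun j => pad (z j)) (t - 1) i ∧
      positionOf z D t i = positionOf z D (t - 1) i ∧
      distOf z D t i = distOf z D (t - 1) i - 1) ∧
    (x'.getD (positionOf z D (t - 1) i) false = x'.getD (t - 1) false →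
      ∀ ℓ : ℕ,
        (∀ j : ℕ, 1 ≤ j → j ≤ ℓ → positionOf z D (t - 1) i + j ∈ D i) →
        positionOf z D (t - 1) i + ℓ + 1 ∉ D i →
        bmaCur R (fun j => pad (z j)) t i = bmaCur R (fun j => pad (z j)) (t - 1) i + 1 ∧
        positionOf z D t i = positionOf z D (t - 1) i + ℓ + 1 ∧
        distOf z D t i = distOf z D (t - 1) i + ℓ) := by
  obtain ⟨s, rfl⟩ : ∃ s, t = s + 1 := ⟨t - 1, by omega⟩
  simp only [Nat.add_sub_cancel] at hw ⊢
  have hbit := bmaBit_eq_of_subword_BMA_eq (by omega) hw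
  have hread : pad (z i) (bmaCur R (fun j => pad (z j)) s i) =
      x'.getD (positionOf z D s i) false := by
    rw [hz i, pad_trace]; rfl
  constructor
  · intro hne
    have hcur : bmaCur R (fun j => pad (z j)) (s + 1) i = bmaCur R (fun j => pad (z j)) s i := by
      rw [bmaCur_succ, if_neg (by rwa [hread, hbit])]
    refine ⟨hcur, by simp only [positionOf, hcur], ?_⟩
    simp only [distOf, positionOf, hcur]
    push_cast; ring
  · intro heq ℓ hgap hnext
    have hcur : bmaCur R (fun j => pad (z j)) (s + 1) i =
        bmaCur R (fun j => pad (z j)) s i + 1 := by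
      rw [bmaCur_succ, if_pos (by rwa [hread, hbit])]
    have hpos : positionOf z D (s + 1) i = positionOf z D s i + ℓ + 1 := by
      rw [positionOf, hcur]
      exact Nat.nth_add_one_eq_of_gap _ (D i).finite_toSet.infinite_compl _ ℓ
        (fun j h1 h2 => not_not.2 (hgap j h1 h2)) hnext
    refine ⟨hcur, hpos, ?_⟩
    simp only [distOf, hpos]
    push_cast; ring

/-- Claim 9: one-step behaviour of the BMA pointers. -/
theorem statement6 (n' R : ℕ) (x' : List Bool) (hx' : x'.length = n')
    (D : Fin R → Finset ℕ) (hD : ∀ i, D i ⊆ Finset.range n')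
    (z : Fin R → List Bool) (hz : ∀ i, z i = trace x' (D i))
    (t : ℕ) (ht : 1 ≤ t) (ht' : t ≤ n')
    (hw : subword (BMA n' R z) 0 (t - 1) = subword x' 0 (t - 1))
    (i : Fin R) :
    (x'.getD (positionOf z D (t - 1) i) false ≠ x'.getD (t - 1) false →
      bmaCur R (fun j => pad (z j)) t i = bmaCur R (fun j => pad (z j)) (t - 1) i ∧
      positionOf z D t i = positionOf z D (t - 1) i ∧
      distOf z D t i = distOf z D (t - 1) i - 1) ∧
    (x'.getD (positionOf z D (t - 1) i) false = x'.getD (t - 1) false →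
      ∀ ℓ : ℕ,
        (∀ j : ℕ, 1 ≤ j → j ≤ ℓ → positionOf z D (t - 1) i + j ∈ D i) →
        positionOf z D (t - 1) i + ℓ + 1 ∉ D i →
        bmaCur R (fun j => pad (z j)) t i = bmaCur R (fun j => pad (z j)) (t - 1) i + 1 ∧
        positionOf z D t i = positionOf z D (t - 1) i + ℓ + 1 ∧
        distOf z D t i = distOf z D (t - 1) i + ℓ) :=
  statement6_general n' R x' D z hz t ht ht' hw i

end TraceRec
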